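/- Let G be a group generated by a family X = (x_1, …, x_n). (a) For every u ∈ G and every palindrome p, the commutator [u, p] = u^{-1} p^{-1} u p is a product of 3 palindromes. (b) For every u ∈ G, every generator x = x_i, and all integers α, β, the element [u, x^α] x^β is a product of 3 palindromes. -/
import Mathlib


/-- The element of `G` represented by a word in the alphabet `X^{±1}`:
a letter `(i, true)` stands for `X i` and `(i, false)` for `(X i)⁻¹`. -/
def evalWord {G : Type*} {n : ℕ} [Group G] (X : Fin n → G) (w : List (Fin n × Bool)) : G :=
  (w.map fun l => if l.2 then X l.1 else (X l.1)⁻¹).prod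

/-- `g` is a palindrome with respect to the generating family `X` if it is represented by
some word whose sequence of letters equals its reverse. -/
def IsPalindrome {G : Type*} {n : ℕ} [Group G] (X : Fin n → G) (g : G) : Prop :=
  ∃ w : List (Fin n × Bool), w.reverse = w ∧ evalWord X w = g

/-- `g` is a product of `k` palindromes with respect to `X`. -/
def IsPalProd {G : Type*} {n : ℕ} [Group G] (X : Fin n → G) (k : ℕ) (g : G) : Prop :=
  ∃ f : Fin k → G, (∀ i, IsPalindrome X (f i)) ∧ (List.ofFn f).prod = g

/-- The palindromic length of `g` with respect to `X`, valued in `ℕ∞`. -/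
noncomputable def palLength {G : Type*} {n : ℕ} [Group G] (X : Fin n → G) (g : G) : ℕ∞ :=
  sInf {k : ℕ∞ | ∃ m : ℕ, k = (m : ℕ∞) ∧ IsPalProd X m g}

/-- The palindromic width of `G` with respect to `X`, valued in `ℕ∞`. -/
noncomputable def palWidth {G : Type*} {n : ℕ} [Group G] (X : Fin n → G) : ℕ∞ :=
  ⨆ g : G, palLength X g

/-- The commutator convention of the paper: `[a, b] = a⁻¹ b⁻¹ a b`. -/
def pcomm {G : Type*} [Group G] (a b : G) : G := a⁻¹ * b⁻¹ * a * b

/-- Formal inversion of a letter. -/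
def letterInv {n : ℕ} (l : Fin n × Bool) : Fin n × Bool := (l.1, !l.2)

lemma letterInv_invol {n : ℕ} : ∀ l : Fin n × Bool, letterInv (letterInv l) = l := by
  rintro ⟨i, b⟩; simp [letterInv]

lemma evalWord_append {G : Type*} {n : ℕ} [Group G] (X : Fin n → G)
    (w₁ w₂ : List (Fin n × Bool)) :
    evalWord X (w₁ ++ w₂) = evalWord X w₁ * evalWord X w₂ := by
  simp [evalWord]

lemma evalWord_inv {G : Type*} {n : ℕ} [Group G] (X : Fin n → G)
    (w : List (Fin n × Bool)) :
    evalWord X ((w.map letterInv).reverse) = (evalWord X w)⁻¹ := by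
  induction w with
  | nil => simp [evalWord]
  | cons l w ih =>
      simp only [List.map_cons, List.reverse_cons]
      rw [evalWord_append, ih]
      rcases l with ⟨i, b⟩
      cases b <;> simp [evalWord, letterInv, mul_comm]

lemma evalWord_reverse {G : Type*} {n : ℕ} [Group G] (X : Fin n → G)
    (w : List (Fin n × Bool)) :
    evalWord X w.reverse = (evalWord X (w.map letterInv))⁻¹ := by
  have := evalWord_inv X (w.map letterInv)
  rwa [List.map_map, show letterInv ∘ letterInv = (id : Fin n × Bool → _) from
    funext letterInv_invol, List.map_id] at this

lemma exists_word {G : Type*} {n : ℕ} [Group G] (X : Fin n → G)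
    (hX : Subgroup.closure (Set.range X) = ⊤) (u : G) :
    ∃ w : List (Fin n × Bool), evalWord X w = u := by
  have hu : u ∈ Subgroup.closure (Set.range X) := by rw [hX]; trivial
  induction hu using Subgroup.closure_induction with
  | mem x hx =>
      obtain ⟨i, rfl⟩ := hx
      exact ⟨[(i, true)], by simp [evalWord]⟩
  | one => exact ⟨[], by simp [evalWord]⟩
  | mul x y _ _ hx hy =>
      obtain ⟨wx, rfl⟩ := hx
      obtain ⟨wy, rfl⟩ := hy
      exact ⟨wx ++ wy, evalWord_append X wx wy⟩
  | inv x _ hx =>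
      obtain ⟨wx, rfl⟩ := hx
      exact ⟨(wx.map letterInv).reverse, evalWord_inv X wx⟩

lemma isPalindrome_inv {G : Type*} {n : ℕ} [Group G] (X : Fin n → G) {g : G}
    (hg : IsPalindrome X g) : IsPalindrome X g⁻¹ := by
  obtain ⟨v, hv, rfl⟩ := hg
  refine ⟨(v.map letterInv).reverse, ?_, evalWord_inv X v⟩
  conv_lhs => rw [← List.map_reverse]
  rw [hv]

lemma isPalindrome_zpow {G : Type*} {n : ℕ} [Group G] (X : Fin n → G) (i : Fin n) (α : ℤ) :
    IsPalindrome X (X i ^ α) := by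
  refine ⟨List.replicate α.natAbs (i, decide (0 ≤ α)), by simp, ?_⟩
  have h : ∀ (m : ℕ) (b : Bool),
      evalWord X (List.replicate m (i, b)) = (if b then X i else (X i)⁻¹) ^ m := by
    intro m b; simp [evalWord, List.map_replicate, List.prod_replicate]
  rcases le_or_gt 0 α with hα | hα
  · rw [h, if_pos (by simpa using hα)]
    rw [← zpow_natCast, Int.natAbs_of_nonneg hα]
  · rw [h, if_neg (by simp [not_le.mpr hα]), inv_pow, ← zpow_natCast,
      ← zpow_neg, ← Int.abs_eq_natAbs, abs_of_neg hα, neg_neg]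

/-- The key lemma: `u⁻¹ * q * u * r` is a product of three palindromes whenever
`q` and `r` are palindromes. -/
lemma isPalProd_three_aux {G : Type*} [Group G] {n : ℕ} (X : Fin n → G)
    (hX : Subgroup.closure (Set.range X) = ⊤) (u q r : G)
    (hq : IsPalindrome X q) (hr : IsPalindrome X r) :
    IsPalProd X 3 (u⁻¹ * q * u * r) := by
  obtain ⟨w, rfl⟩ := exists_word X hX u
  obtain ⟨v, hv, rfl⟩ := hq
  set u := evalWord X w
  set ut := evalWord X (w.map letterInv) with hut
  refine ⟨![u⁻¹ * evalWord X v * ut, ut⁻¹ * u, r], ?_, ?_⟩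
  · have h1 : IsPalindrome X (u⁻¹ * evalWord X v * ut) := by
      refine ⟨(w.map letterInv).reverse ++ v ++ (w.map letterInv), ?_, ?_⟩
      · simp only [List.reverse_append, List.reverse_reverse, hv, List.append_assoc]
      · rw [evalWord_append, evalWord_append, evalWord_inv]
    have h2 : IsPalindrome X (ut⁻¹ * u) := by
      refine ⟨w.reverse ++ w, by simp, ?_⟩
      rw [evalWord_append, evalWord_reverse]
    intro j
    fin_cases j
    · exact h1
    · exact h2
    · exact hr
  · show (u⁻¹ * evalWord X v * ut) * ((ut⁻¹ * u) * (r * 1)) = u⁻¹ * evalWord X v * u * r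
    group

/-- (a) For every `u` and every palindrome `p`, the commutator `[u, p]` is a product of 3
palindromes; (b) every element `[u, x^α] x^β` with `x` a generator is a product of 3
palindromes. -/
theorem isPalProd_three {G : Type*} [Group G] {n : ℕ} (X : Fin n → G)
    (hX : Subgroup.closure (Set.range X) = ⊤) :
    (∀ u p : G, IsPalindrome X p → IsPalProd X 3 (pcomm u p)) ∧
      (∀ (u : G) (i : Fin n) (α β : ℤ), IsPalProd X 3 (pcomm u (X i ^ α) * X i ^ β)) := by
  constructor
  · intro u p hp
    have := isPalProd_three_aux X hX u p⁻¹ p (isPalindrome_inv X hp) hp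
    simpa [pcomm, mul_assoc] using this
  · intro u i α β
    have := isPalProd_three_aux X hX u (X i ^ (-α)) (X i ^ (α + β))
      (isPalindrome_zpow X i (-α)) (isPalindrome_zpow X i (α + β))
    have e : u⁻¹ * X i ^ (-α) * u * X i ^ (α + β) = pcomm u (X i ^ α) * X i ^ β := by
      simp [pcomm, zpow_add, zpow_neg, mul_assoc]
    rwa [e] at this
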